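/- arXiv:math/9905065 — 2 statements merged into one kernel-verified Lean document; each statement's English description precedes it below -/
import Mathlib

section
/- The symmetrization map β : S(g) → U(g) restricts to a linear isomorphism from the g-invariants I = S(g)^g onto the center Z = U(g)^g. -/
/-!
For every `a ∈ g`, `β` intertwines the derivation `Dact a` of `S(g)` with the inner derivation
`u ↦ a * u - u * a` of `U(g)`: on a product of `n` degree-one elements both sides are the sum,
over the `n` positions, of the same product with that factor `x` replaced by `⁅a, x⁆`
(symmetrized, on the `U(g)` side), and such products span `S(g)`. A linear isomorphism
intertwining two families of maps matches their common kernels, and these kernels are `I` and `Z`.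
-/

open MvPolynomial Function

theorem map_list_prod_ofFn_of_leibniz {R : Type*} [Ring R] (D : R → R)
    (hD : ∀ x y, D (x * y) = D x * y + x * D y) {n : ℕ} (y : Fin n → R) :
    D (List.ofFn y).prod = ∑ i, (List.ofFn (update y i (D (y i)))).prod := by
  induction n with
  | zero => simpa using hD 1 1
  | succ n ih =>
    refine Fin.consCases (fun y₀ t => ?_) y
    simp only [Fin.sum_univ_succ, List.ofFn_cons, List.prod_cons, hD, ih, Finset.mul_sum,
      Fin.cons_zero, Fin.cons_succ, Fin.update_cons_zero, ← Fin.cons_update]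

theorem Derivation.map_prod_univ {R A : Type*} [CommRing R] [CommRing A] [Algebra R A]
    (D : Derivation R A A) {n : ℕ} (f : Fin n → A) :
    D (∏ i, f i) = ∑ i, ∏ j, update f i (D (f i)) j := by
  have hleib : ∀ x y, D (x * y) = D x * y + x * D y := fun x y => by
    rw [D.leibniz, smul_eq_mul, smul_eq_mul, add_comm, mul_comm]
  simpa only [List.prod_ofFn] using map_list_prod_ofFn_of_leibniz D hleib f

def symmetrizedProd {A : Type*} [Ring A] {n : ℕ} (y : Fin n → A) : A :=
  ∑ σ : Equiv.Perm (Fin n), (List.ofFn fun i => y (σ i)).prod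

theorem mul_symmetrizedProd_sub_symmetrizedProd_mul {A : Type*} [Ring A] (a : A) {n : ℕ}
    (y : Fin n → A) :
    a * symmetrizedProd y - symmetrizedProd y * a =
      ∑ i, symmetrizedProd (update y i (a * y i - y i * a)) := by
  have hleib : ∀ x z : A, a * (x * z) - x * z * a = (a * x - x * a) * z + x * (a * z - z * a) :=
    fun x z => by noncomm_ring
  simp only [symmetrizedProd, Finset.mul_sum, Finset.sum_mul, ← Finset.sum_sub_distrib]
  rw [Finset.sum_comm]
  refine Finset.sum_congr rfl fun σ _ => ?_
  -- reindex the positions by `σ`, so that position `i` of `y ∘ σ` becomes position `σ i` of `y`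
  rw [map_list_prod_ofFn_of_leibniz (fun x => a * x - x * a) hleib,
    ← Equiv.sum_comp σ fun i => (List.ofFn fun k => update y i (a * y i - y i * a) (σ k)).prod]
  refine Finset.sum_congr rfl fun i _ => ?_
  congr 2
  funext j
  rw [update_apply_equiv_apply, σ.symm_apply_apply]
  rfl

theorem LinearEquiv.bijOn_forall_eq_zero_of_intertwines {R M N α : Type*} [Semiring R]
    [AddCommMonoid M] [AddCommMonoid N] [Module R M] [Module R N] (e : M ≃ₗ[R] N)
    {D : α → M → M} {E : α → N → N} (h : ∀ a p, e (D a p) = E a (e p)) :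
    Set.BijOn e {p | ∀ a, D a p = 0} {u | ∀ a, E a u = 0} := by
  refine ⟨fun p hp a => ?_, e.injective.injOn,
    fun u hu => ⟨e.symm u, fun a => ?_, e.apply_symm_apply u⟩⟩
  · rw [← h, hp a, map_zero]
  · apply e.injective
    rw [h, e.apply_symm_apply, hu a, map_zero]

theorem UniversalEnvelopingAlgebra.ι_lie {R L : Type*} [CommRing R] [LieRing L]
    [LieAlgebra R L] (a b : L) : ι R ⁅a, b⁆ = ι R a * ι R b - ι R b * ι R a := by
  let _ := LieRing.ofAssociativeRing (A := UniversalEnvelopingAlgebra R L)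
  rw [LieHom.map_lie, Ring.lie_def]

section Basis

variable {K M ι : Type*} [CommRing K] [AddCommGroup M] [Module K M] (B : Module.Basis ι K M)

theorem Module.Basis.constr_X_apply [Fintype ι] (y : M) :
    B.constr K X y = ∑ j, B.repr y j • (X j : MvPolynomial ι K) := by
  simp [Module.Basis.constr_apply_fintype]

theorem Derivation.map_constr_X (D : Derivation K (MvPolynomial ι K) (MvPolynomial ι K))
    (f : M →ₗ[K] M) (hD : ∀ i, D (X i) = B.constr K X (f (B i))) (y : M) :
    D (B.constr K X y) = B.constr K X (f y) := by
  have h : D.toLinearMap ∘ₗ B.constr K X = B.constr K X ∘ₗ f :=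
    B.ext fun i => by simp [hD]
  exact LinearMap.congr_fun h y

theorem Module.Basis.span_prod_constr_X_eq_top :
    Submodule.span K
      {p | ∃ (n : ℕ) (x : Fin n → M), ∏ i, B.constr K (X : ι → MvPolynomial ι K) (x i) = p} =
        ⊤ := by
  rw [eq_top_iff, ← Algebra.top_toSubmodule, ← adjoin_range_X, Algebra.adjoin_eq_span]
  refine Submodule.span_mono fun p hp => ?_
  induction hp using Submonoid.closure_induction with
  | mem _ hX =>
    obtain ⟨k, rfl⟩ := hX
    exact ⟨1, ![B k], by simp⟩
  | one => exact ⟨0, ![], by simp⟩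
  | mul _ _ _ _ hp hq =>
    obtain ⟨n, x, rfl⟩ := hp
    obtain ⟨m, y, rfl⟩ := hq
    exact ⟨n + m, Fin.append x y, by simp [Fin.prod_univ_add]⟩

end Basis

section Symmetrization

open UniversalEnvelopingAlgebra

variable {K g κ : Type*} [Field K] [LieRing g] [LieAlgebra K g]

def IsSymmetrization (B : Module.Basis κ K g)
    (β : MvPolynomial κ K →ₗ[K] UniversalEnvelopingAlgebra K g) : Prop :=
  ∀ (n : ℕ) (x : Fin n → g),
    β (∏ i, B.constr K X (x i)) = (n.factorial : K)⁻¹ • symmetrizedProd fun i => ι K (x i)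

variable {B : Module.Basis κ K g} {β : MvPolynomial κ K →ₗ[K] UniversalEnvelopingAlgebra K g}
  {D : Derivation K (MvPolynomial κ K) (MvPolynomial κ K)} {a : g}

theorem IsSymmetrization.map_derivation_prod_constr_X (hβ : IsSymmetrization B β)
    (hD : ∀ i, D (X i) = B.constr K X ⁅a, B i⁆) {n : ℕ} (x : Fin n → g) :
    β (D (∏ i, B.constr K X (x i))) =
      ι K a * β (∏ i, B.constr K X (x i)) - β (∏ i, B.constr K X (x i)) * ι K a := by
  have hDx : ∀ m, D (B.constr K X (x m)) = B.constr K X ⁅a, x m⁆ :=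
    fun m => D.map_constr_X B (LieAlgebra.ad K g a) hD (x m)
  have hupdS : ∀ m j,
      update (fun i => B.constr K (X : κ → MvPolynomial κ K) (x i)) m (B.constr K X ⁅a, x m⁆) j =
        B.constr K X (update x m ⁅a, x m⁆ j) :=
    fun m j => (apply_update (fun _ => B.constr K X) x m _ j).symm
  have hupdU : ∀ m, update (fun i => ι K (x i)) m (ι K ⁅a, x m⁆) =
      fun j => ι K (update x m ⁅a, x m⁆ j) :=
    fun m => funext fun j => (apply_update (fun _ => ι K) x m _ j).symm
  calc β (D (∏ i, B.constr K X (x i)))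
      = ∑ m, β (∏ j, B.constr K X (update x m ⁅a, x m⁆ j)) := by
        simp only [D.map_prod_univ, map_sum, hDx, hupdS]
    _ = (n.factorial : K)⁻¹ • ∑ m, symmetrizedProd fun j => ι K (update x m ⁅a, x m⁆ j) := by
        simp only [hβ n, Finset.smul_sum]
    _ = (n.factorial : K)⁻¹ • (ι K a * symmetrizedProd (fun i => ι K (x i)) -
          symmetrizedProd (fun i => ι K (x i)) * ι K a) := by
        rw [mul_symmetrizedProd_sub_symmetrizedProd_mul]
        simp only [← ι_lie, hupdU]
    _ = _ := by rw [hβ n, mul_smul_comm, smul_mul_assoc, smul_sub]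

theorem IsSymmetrization.map_derivation (hβ : IsSymmetrization B β)
    (hD : ∀ i, D (X i) = B.constr K X ⁅a, B i⁆) (p : MvPolynomial κ K) :
    β (D p) = ι K a * β p - β p * ι K a := by
  have h : β ∘ₗ D.toLinearMap =
      (LinearMap.mulLeft K (ι K a) - LinearMap.mulRight K (ι K a)) ∘ₗ β := by
    refine LinearMap.ext_on B.span_prod_constr_X_eq_top ?_
    rintro _ ⟨n, x, rfl⟩
    simpa using hβ.map_derivation_prod_constr_X hD x
  simpa using LinearMap.congr_fun h p

end Symmetrization

theorem symmetrization_bijOn_invariants_center_general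
    {K : Type*} [Field K]
    {g : Type*} [LieRing g] [LieAlgebra K g]
    {ι : Type*} [Fintype ι] (B : Module.Basis ι K g)
    (β : MvPolynomial ι K ≃ₗ[K] UniversalEnvelopingAlgebra K g)
    (hβ : ∀ (n : ℕ) (x : Fin n → g),
      β (∏ i, ∑ j, B.repr (x i) j • MvPolynomial.X j) =
        ((Nat.factorial n : K))⁻¹ •
          ∑ σ : Equiv.Perm (Fin n),
            (List.ofFn fun i => UniversalEnvelopingAlgebra.ι K (x (σ i))).prod)
    (Dact : g → Derivation K (MvPolynomial ι K) (MvPolynomial ι K))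
    (hD : ∀ (a : g) (i : ι),
      Dact a (MvPolynomial.X i) = ∑ j, B.repr ⁅a, B i⁆ j • MvPolynomial.X j) :
    Set.BijOn β {p : MvPolynomial ι K | ∀ a : g, Dact a p = 0}
      {u : UniversalEnvelopingAlgebra K g | ∀ a : g,
        UniversalEnvelopingAlgebra.ι K a * u = u * UniversalEnvelopingAlgebra.ι K a} := by
  simp only [← B.constr_X_apply] at hβ hD
  have hsym : IsSymmetrization B β.toLinearMap := hβ
  simpa only [sub_eq_zero] using β.bijOn_forall_eq_zero_of_intertwines
    (E := fun a u => UniversalEnvelopingAlgebra.ι K a * u - u * UniversalEnvelopingAlgebra.ι K a)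
    fun a => hsym.map_derivation (hD a)

/-- Let `g` be a finite-dimensional Lie algebra over a field `K` of
characteristic zero, `S(g)` identified with `MvPolynomial ι K` via a basis `B`, `β` the
PBW symmetrization map and `Dact` the extended adjoint action on `S(g)` (a derivation for
each `a ∈ g`).  Then `β` restricts to a (linear) isomorphism from the invariants
`I = S(g)^g = {p | ∀ a, Dact a p = 0}` onto the center
`Z = U(g)^g = {u | ∀ a, a * u = u * a}`. -/
theorem symmetrization_bijOn_invariants_center
    {K : Type*} [Field K] [CharZero K]
    {g : Type*} [LieRing g] [LieAlgebra K g] [FiniteDimensional K g]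
    {ι : Type*} [Fintype ι] (B : Module.Basis ι K g)
    (β : MvPolynomial ι K ≃ₗ[K] UniversalEnvelopingAlgebra K g)
    (hβ : ∀ (n : ℕ) (x : Fin n → g),
      β (∏ i, ∑ j, B.repr (x i) j • MvPolynomial.X j) =
        ((Nat.factorial n : K))⁻¹ •
          ∑ σ : Equiv.Perm (Fin n),
            (List.ofFn fun i => UniversalEnvelopingAlgebra.ι K (x (σ i))).prod)
    (Dact : g → Derivation K (MvPolynomial ι K) (MvPolynomial ι K))
    (hD : ∀ (a : g) (i : ι),
      Dact a (MvPolynomial.X i) = ∑ j, B.repr ⁅a, B i⁆ j • MvPolynomial.X j) :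
    Set.BijOn β {p : MvPolynomial ι K | ∀ a : g, Dact a p = 0}
      {u : UniversalEnvelopingAlgebra K g | ∀ a : g,
        UniversalEnvelopingAlgebra.ι K a * u = u * UniversalEnvelopingAlgebra.ι K a} :=
  symmetrization_bijOn_invariants_center_general B β hβ Dact hD
end

section
/- A distribution T on g with support contained in {0} annihilates every element of the right ideal generated by the adjoint vector fields if and only if the corresponding element of S(g) (under the identification of point-supported distributions with S(g)) is g-invariant. -/
/-- The adjoint vector field `adj_a` of a Lie algebra `(g, l)`, acting on functions by
`(adj_a f)(x) = -Df(x)[[a,x]]`, where `[a,x] = l a x`. -/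
noncomputable def adjVF {g : Type*} [NormedAddCommGroup g] [NormedSpace ℝ g]
    (l : g →ₗ[ℝ] g →ₗ[ℝ] g) (a : g) (f : g → ℝ) : g → ℝ :=
  fun x => -(fderiv ℝ f x (l a x))

set_option linter.unusedSectionVars false
set_option maxHeartbeats 1000000

open MvPolynomial

section Aux
open MvPolynomial
variable {g : Type*} [NormedAddCommGroup g] [NormedSpace ℝ g] [FiniteDimensional ℝ g]
variable {ι : Type*} [Fintype ι]

variable {g : Type*} [NormedAddCommGroup g] [NormedSpace ℝ g] [FiniteDimensional ℝ g]

lemma aux_smooth_dirderiv {f : g → ℝ} (hf : ContDiff ℝ (⊤ : ℕ∞) f) (v : g) :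
    ContDiff ℝ (⊤ : ℕ∞) (fun x => fderiv ℝ f x v) :=
  (hf.fderiv_right (by simp)).clm_apply contDiff_const

lemma aux_smooth_adjVF (l : g →ₗ[ℝ] g →ₗ[ℝ] g) (a : g) {f : g → ℝ} (hf : ContDiff ℝ (⊤ : ℕ∞) f) :
    ContDiff ℝ (⊤ : ℕ∞) (adjVF l a f) := by
  have h : adjVF l a f
      = fun x => -((fderiv ℝ f x) ((LinearMap.toContinuousLinearMap (l a)) x)) := rfl
  rw [h]
  exact ((hf.fderiv_right (by simp)).clm_apply
    (LinearMap.toContinuousLinearMap (l a)).contDiff).neg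

lemma aux_fderiv_adjVF (l : g →ₗ[ℝ] g →ₗ[ℝ] g) (a : g) {f : g → ℝ}
    (hf : ContDiff ℝ (⊤ : ℕ∞) f) (v x : g) :
    fderiv ℝ (adjVF l a f) x v
      = adjVF l a (fun y => fderiv ℝ f y v) x - fderiv ℝ f x (l a v) := by
  set La := LinearMap.toContinuousLinearMap (l a) with hLa
  have hfd : Differentiable ℝ f := hf.differentiable (by simp)
  have hF : ContDiff ℝ (⊤ : ℕ∞) (fderiv ℝ f) := hf.fderiv_right (by simp)
  have hFd : Differentiable ℝ (fderiv ℝ f) := hF.differentiable (by simp)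
  have hadj : adjVF l a f = fun y => -((fderiv ℝ f y) (La y)) := rfl
  have h1 : fderiv ℝ (fun y => (fderiv ℝ f y) (La y)) x
      = ((fderiv ℝ f x).comp (fderiv ℝ (⇑La) x))
        + (fderiv ℝ (fderiv ℝ f) x).flip (La x) :=
    fderiv_clm_apply (hFd x) (La.differentiable x)
  have h2 : fderiv ℝ (fun y => (fderiv ℝ f y) v) x
      = (fderiv ℝ (fderiv ℝ f) x).flip v := by
    have := fderiv_clm_apply (x := x) (c := fderiv ℝ f) (u := fun _ => v)
      (hFd x) (differentiableAt_const v)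
    simpa using this
  have hsymm : ∀ w u : g, (fderiv ℝ (fderiv ℝ f) x) w u = (fderiv ℝ (fderiv ℝ f) x) u w :=
    second_derivative_symmetric (fun y => (hfd y).hasFDerivAt)
      ((hFd x).hasFDerivAt)
  rw [hadj, fderiv_fun_neg, h1]
  have hLax : ∀ y : g, La y = l a y := fun _ => rfl
  simp only [ContinuousLinearMap.neg_apply, ContinuousLinearMap.add_apply,
    ContinuousLinearMap.comp_apply, ContinuousLinearMap.flip_apply, La.fderiv]
  rw [adjVF]
  rw [h2]
  simp only [ContinuousLinearMap.flip_apply, hLax]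
  rw [hsymm v (l a x)]
  ring


noncomputable def Pf (B : Module.Basis ι ℝ g) (r : MvPolynomial ι ℝ) : g → ℝ :=
  fun x => MvPolynomial.eval (fun i => B.repr x i) r

lemma Pf_coord (B : Module.Basis ι ℝ g) (j : ι) :
    (fun x : g => (B.repr x j : ℝ)) = ⇑(LinearMap.toContinuousLinearMap (B.coord j)) := by
  funext x; simp

lemma Pf_smooth (B : Module.Basis ι ℝ g) (r : MvPolynomial ι ℝ) : ContDiff ℝ (⊤ : ℕ∞) (Pf B r) := by
  induction r using MvPolynomial.induction_on with
  | C c =>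
      have : Pf B (C c) = fun _ => c := by funext x; simp [Pf]
      rw [this]; exact contDiff_const
  | add p q hp hq =>
      have : Pf B (p + q) = fun x => Pf B p x + Pf B q x := by
        funext x; simp [Pf]
      rw [this]; exact hp.add hq
  | mul_X p j hp =>
      have : Pf B (p * X j) = fun x => Pf B p x * B.repr x j := by
        funext x; simp [Pf]
      rw [this]
      exact hp.mul ((Pf_coord B j) ▸ (LinearMap.toContinuousLinearMap (B.coord j)).contDiff)

lemma Pf_diff (B : Module.Basis ι ℝ g) (r : MvPolynomial ι ℝ) : Differentiable ℝ (Pf B r) :=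
  (Pf_smooth B r).differentiable (by simp)

lemma Pf_smul (B : Module.Basis ι ℝ g) (c : ℝ) (r : MvPolynomial ι ℝ) :
    Pf B (c • r) = fun x => c * Pf B r x := by
  funext x; simp [Pf, MvPolynomial.smul_eq_C_mul]

lemma Pf_deriv (B : Module.Basis ι ℝ g) (r : MvPolynomial ι ℝ) (i : ι) (x : g) :
    fderiv ℝ (Pf B r) x (B i) = Pf B (pderiv i r) x := by
  classical
  induction r using MvPolynomial.induction_on with
  | C c =>
      have : Pf B (C c) = fun _ => c := by funext y; simp [Pf]
      rw [this]
      simp [Pf]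
  | add p q hp hq =>
      have h : Pf B (p + q) = fun y => Pf B p y + Pf B q y := by funext y; simp [Pf]
      rw [h, fderiv_fun_add ((Pf_diff B p).differentiableAt) ((Pf_diff B q).differentiableAt)]
      simp only [ContinuousLinearMap.add_apply, hp, hq]
      simp [Pf]
  | mul_X p j hp =>
      have h : Pf B (p * X j) = fun y => Pf B p y * B.repr y j := by funext y; simp [Pf]
      have hco : Differentiable ℝ (fun y : g => (B.repr y j : ℝ)) := by
        rw [Pf_coord]; exact (LinearMap.toContinuousLinearMap (B.coord j)).differentiable
      rw [h, fderiv_fun_mul ((Pf_diff B p).differentiableAt) (hco.differentiableAt)]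
      have hcod : fderiv ℝ (fun y : g => (B.repr y j : ℝ)) x (B i)
          = if i = j then (1:ℝ) else 0 := by
        rw [Pf_coord, (LinearMap.toContinuousLinearMap (B.coord j)).fderiv]
        simp [Module.Basis.repr_self, Finsupp.single_apply]
      simp only [ContinuousLinearMap.add_apply, ContinuousLinearMap.smul_apply,
        smul_eq_mul, hp, hcod]
      rw [pderiv_mul]
      by_cases hij : i = j
      · subst hij
        simp [Pf, pderiv_X_self]; ring
      · rw [pderiv_X]
        simp [Pf, Pi.single_apply, hij]; ring
lemma Pf_smul' (B : Module.Basis ι ℝ g) (c : ℝ) (r : MvPolynomial ι ℝ) :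
    Pf B (c • r) = c • Pf B r := by
  funext x; simp [Pf, MvPolynomial.smul_eq_C_mul]

lemma factorial_prod_pred {m : ι →₀ ℕ} {i : ι} (hn : m i ≠ 0) :
    (∏ j : ι, Nat.factorial (m j)) = m i * ∏ j : ι, Nat.factorial ((m - Finsupp.single i 1 : ι →₀ ℕ) j) := by
  classical
  rw [← Finset.mul_prod_erase Finset.univ (fun j => Nat.factorial (m j)) (Finset.mem_univ i),
      ← Finset.mul_prod_erase Finset.univ (fun j => Nat.factorial ((m - Finsupp.single i 1 : ι →₀ ℕ) j))
        (Finset.mem_univ i), ← mul_assoc]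
  congr 1
  · have h1 : (m - Finsupp.single i 1 : ι →₀ ℕ) i = m i - 1 := by
      simp [Finsupp.tsub_apply]
    rw [h1, Nat.mul_factorial_pred hn]
  · apply Finset.prod_congr rfl
    intro j hj
    have hji : j ≠ i := (Finset.mem_erase.mp hj).1
    have : (m - Finsupp.single i 1 : ι →₀ ℕ) j = m j := by
      simp [Finsupp.tsub_apply, Finsupp.single_apply, Ne.symm hji]
    rw [this]

lemma pairing (B : Module.Basis ι ℝ g)
    (Φ : MvPolynomial ι ℝ →ₗ[ℝ] ((g → ℝ) →ₗ[ℝ] (g → ℝ)))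
    (hΦ1 : ∀ f : g → ℝ, Φ 1 f = f)
    (hΦX : ∀ (p : MvPolynomial ι ℝ) (i : ι) (f : g → ℝ), ContDiff ℝ (⊤ : ℕ∞) f →
      Φ (p * MvPolynomial.X i) f = Φ p (fun x => fderiv ℝ f x (B i)))
    (q : MvPolynomial ι ℝ) :
    ∀ m : ι →₀ ℕ, Φ q (Pf B (monomial m 1)) 0 = (∏ j, (Nat.factorial (m j) : ℝ)) * coeff m q := by
  classical
  induction q using MvPolynomial.induction_on with
  | C c =>
      intro m
      have hC : (C c : MvPolynomial ι ℝ) = c • 1 := by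
        rw [MvPolynomial.smul_eq_C_mul, mul_one]
      have hΦC : Φ (C c) (Pf B (monomial m 1)) 0 = c * Pf B (monomial m 1) 0 := by
        rw [hC, map_smul, LinearMap.smul_apply, hΦ1, Pi.smul_apply, smul_eq_mul]
      rw [hΦC, coeff_C]
      by_cases hm : m = 0
      · subst hm
        simp [Pf]
      · obtain ⟨j, hj⟩ := Finsupp.support_nonempty_iff.mpr hm
        have hz : Pf B (monomial m 1) 0 = 0 := by
          rw [Pf]
          simp only [map_zero, Finsupp.coe_zero, Pi.zero_apply, eval_monomial, one_mul]
          exact Finset.prod_eq_zero hj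
            (by simp [zero_pow (Finsupp.mem_support_iff.mp hj)])
        rw [hz, if_neg (fun h => hm h.symm)]
        ring
  | add q q' hq hq' =>
      intro m
      rw [map_add, LinearMap.add_apply, Pi.add_apply, hq m, hq' m, coeff_add]
      ring
  | mul_X q i hq =>
      intro m
      rw [hΦX q i _ (Pf_smooth B _)]
      have hfun : (fun x => fderiv ℝ (Pf B (monomial m 1)) x (B i))
          = Pf B (pderiv i (monomial m 1)) := funext (Pf_deriv B _ i)
      rw [hfun, pderiv_monomial]
      have hmon : (monomial (m - Finsupp.single i 1 : ι →₀ ℕ) ((1:ℝ) * (m i : ℕ)))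
          = ((m i : ℕ) : ℝ) • monomial (m - Finsupp.single i 1 : ι →₀ ℕ) (1:ℝ) := by
        rw [one_mul, MvPolynomial.smul_monomial, smul_eq_mul, mul_one]
      rw [hmon, Pf_smul', map_smul, Pi.smul_apply, smul_eq_mul,
        hq (m - Finsupp.single i 1 : ι →₀ ℕ), coeff_mul_X']
      by_cases hi : i ∈ m.support
      · rw [if_pos hi]
        have := factorial_prod_pred (m := m) (i := i) (Finsupp.mem_support_iff.mp hi)
        have hcast : (∏ j, (Nat.factorial (m j) : ℝ))
            = (m i : ℝ) * ∏ j, (Nat.factorial ((m - Finsupp.single i 1 : ι →₀ ℕ) j) : ℝ) := by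
          push_cast [← this]
          norm_cast
        rw [hcast]; ring
      · rw [if_neg hi]
        have : m i = 0 := by simpa using Finsupp.notMem_support_iff.mp hi
        rw [this]
        simp
lemma key (l : g →ₗ[ℝ] g →ₗ[ℝ] g) (B : Module.Basis ι ℝ g)
    (Φ : MvPolynomial ι ℝ →ₗ[ℝ] ((g → ℝ) →ₗ[ℝ] (g → ℝ)))
    (hΦ1 : ∀ f : g → ℝ, Φ 1 f = f)
    (hΦX : ∀ (p : MvPolynomial ι ℝ) (i : ι) (f : g → ℝ), ContDiff ℝ (⊤ : ℕ∞) f →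
      Φ (p * MvPolynomial.X i) f = Φ p (fun x => fderiv ℝ f x (B i)))
    (Dact : g → Derivation ℝ (MvPolynomial ι ℝ) (MvPolynomial ι ℝ))
    (hD : ∀ (a : g) (i : ι),
      Dact a (MvPolynomial.X i) = ∑ j, B.repr (l a (B i)) j • MvPolynomial.X j)
    (p : MvPolynomial ι ℝ) :
    ∀ (a : g) (f : g → ℝ), ContDiff ℝ (⊤ : ℕ∞) f →
      Φ p (adjVF l a f) 0 = -(Φ (Dact a p) f 0) := by
  induction p using MvPolynomial.induction_on with
  | C c =>
      intro a f hf
      have h0 : Dact a (C c) = 0 := by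
        have hC : (C c : MvPolynomial ι ℝ) = algebraMap ℝ _ c := rfl
        rw [hC, Derivation.map_algebraMap]
      rw [h0, map_zero]
      have hC : (C c : MvPolynomial ι ℝ) = c • 1 := by
        rw [MvPolynomial.smul_eq_C_mul, mul_one]
      rw [hC, map_smul, LinearMap.smul_apply, hΦ1, Pi.smul_apply, smul_eq_mul]
      have hz : adjVF l a f 0 = 0 := by simp [adjVF]
      rw [hz]
      simp
  | add p q hp hq =>
      intro a f hf
      simp only [map_add, LinearMap.add_apply, Pi.add_apply]
      rw [hp a f hf, hq a f hf]
      ring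
  | mul_X p i hp =>
      intro a f hf
      set Df : g → ℝ := fun x => fderiv ℝ f x (B i) with hDf
      have hDfs : ContDiff ℝ (⊤ : ℕ∞) Df := aux_smooth_dirderiv hf (B i)
      set c : ι → ℝ := fun j => B.repr (l a (B i)) j with hc
      rw [hΦX p i _ (aux_smooth_adjVF l a hf)]
      have hfun : (fun x => fderiv ℝ (adjVF l a f) x (B i))
          = adjVF l a Df - ∑ j, c j • (fun x => fderiv ℝ f x (B j)) := by
        funext x
        rw [Pi.sub_apply, aux_fderiv_adjVF l a hf (B i) x]
        congr 1
        have hrepr : l a (B i) = ∑ j, c j • B j := (B.sum_repr (l a (B i))).symm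
        rw [hrepr, map_sum]
        simp [smul_eq_mul]
      have hterm : ∀ j, (Φ p ((c j) • fun x => fderiv ℝ f x (B j))) 0
          = c j * Φ (p * X j) f 0 := by
        intro j
        rw [map_smul, Pi.smul_apply, smul_eq_mul, ← hΦX p j f hf]
      have hleib : Dact a (p * X i) = (∑ j, c j • (p * X j)) + Dact a p * X i := by
        have h1 : Dact a (p * X i) = p * (Dact a (X i)) + (X i) * (Dact a p) := by
          simpa [smul_eq_mul] using (Dact a).leibniz p (X i)
        rw [h1, hD a i, Finset.mul_sum, mul_comm (X i : MvPolynomial ι ℝ)]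
        congr 1
        exact Finset.sum_congr rfl fun j _ => (mul_smul_comm _ _ _)
      have hDact : Φ (Dact a (p * X i)) f 0
          = (∑ j, c j * Φ (p * X j) f 0) + Φ (Dact a p) Df 0 := by
        rw [hleib, map_add, LinearMap.add_apply, Pi.add_apply, map_sum,
          LinearMap.sum_apply, Finset.sum_apply, hΦX (Dact a p) i f hf]
        congr 1
        refine Finset.sum_congr rfl fun j _ => ?_
        rw [map_smul, LinearMap.smul_apply, Pi.smul_apply, smul_eq_mul]
      rw [hfun, map_sub, Pi.sub_apply, map_sum, Finset.sum_apply,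
        hp a Df hDfs, hDact]
      rw [Finset.sum_congr rfl fun j _ => hterm j]
      ring
end Aux

/-- Let `g` be a finite-dimensional real Lie algebra (normed space with
bilinear alternating bracket `l`), with a basis `B : ι → g`.  Identify `S(g)` with
`MvPolynomial ι ℝ`, and identify distributions on `g` supported at `{0}` with elements
`p` of `S(g)` via `p ↦ (f ↦ (p(∂)f)(0))`; here `p(∂)` is the constant-coefficient
operator `Φ p`, where `Φ` is the (unique) linear map with `Φ 1 = id` and
`Φ (p·Xᵢ) f = Φ p (∂_{B i} f)` on smooth functions.  `Dact` is the extended adjoint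
action of `g` on `S(g)` by derivations.  Then the distribution `T_p : f ↦ (Φ p f) 0`
annihilates every element of the right ideal generated by the adjoint vector fields —
equivalently, `T_p (adj_a h) = 0` for every `a ∈ g` and every smooth `h` — if and only
if `p` is `g`-invariant. -/
theorem pointSupported_annihilates_adjoint_ideal_iff_invariant
    {g : Type*} [NormedAddCommGroup g] [NormedSpace ℝ g] [FiniteDimensional ℝ g]
    (l : g →ₗ[ℝ] g →ₗ[ℝ] g)
    (halt : ∀ x : g, l x x = 0)
    (hjac : ∀ x y z : g, l x (l y z) = l (l x y) z + l y (l x z))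
    {ι : Type*} [Fintype ι] (B : Module.Basis ι ℝ g)
    (Φ : MvPolynomial ι ℝ →ₗ[ℝ] ((g → ℝ) →ₗ[ℝ] (g → ℝ)))
    (hΦ1 : ∀ f : g → ℝ, Φ 1 f = f)
    (hΦX : ∀ (p : MvPolynomial ι ℝ) (i : ι) (f : g → ℝ), ContDiff ℝ (⊤ : ℕ∞) f →
      Φ (p * MvPolynomial.X i) f = Φ p (fun x => fderiv ℝ f x (B i)))
    (Dact : g → Derivation ℝ (MvPolynomial ι ℝ) (MvPolynomial ι ℝ))
    (hD : ∀ (a : g) (i : ι),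
      Dact a (MvPolynomial.X i) = ∑ j, B.repr (l a (B i)) j • MvPolynomial.X j)
    (p : MvPolynomial ι ℝ) :
    (∀ (a : g) (f : g → ℝ), ContDiff ℝ (⊤ : ℕ∞) f → Φ p (adjVF l a f) 0 = 0) ↔
      (∀ a : g, Dact a p = 0) := by
  constructor
  · intro h a
    apply MvPolynomial.ext
    intro m
    have hk := key l B Φ hΦ1 hΦX Dact hD p a (Pf B (monomial m 1)) (Pf_smooth B _)
    rw [h a _ (Pf_smooth B _)] at hk
    have h0 : Φ (Dact a p) (Pf B (monomial m 1)) 0 = 0 := by linarith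
    rw [pairing B Φ hΦ1 hΦX (Dact a p) m] at h0
    have hfac : (∏ j, (Nat.factorial (m j) : ℝ)) ≠ 0 :=
      ne_of_gt (Finset.prod_pos fun j _ => by exact_mod_cast Nat.factorial_pos (m j))
    have := (mul_eq_zero.mp h0).resolve_left hfac
    simpa using this
  · intro h a f hf
    rw [key l B Φ hΦ1 hΦX Dact hD p a f hf, h a]
    simp
end
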